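/- arXiv:0902.1623 — 2 statements merged into one kernel-verified Lean document; each statement's English description precedes it below -/
import Mathlib

section
/- Let n ≥ 2 be an integer, let 0 < H < (n-1)/n and let d ∈ ℝ. Choose ρ₀ > 0 such that M_{H,d} > 0 and P_{H,d} > 0 on [ρ₀, ∞), and define λ(ρ) := ∫_{ρ₀}^{ρ} Q_{H,d}(t) dt for ρ ≥ ρ₀. Then lim_{ρ→∞} λ(ρ)/ρ = (nH/(n-1)) / √(1 − (nH/(n-1))²). -/
open Filter Topology

/-- `Ifun m t = ∫₀ᵗ sinh^m(r) dr`. -/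
noncomputable def Ifun (m : ℕ) (t : ℝ) : ℝ := ∫ r in (0:ℝ)..t, Real.sinh r ^ m

/-- `Mfun n H d t = sinh^{n-1}(t) − nH·I_{n-1}(t) − d`. -/
noncomputable def Mfun (n : ℕ) (H d t : ℝ) : ℝ :=
  Real.sinh t ^ (n - 1) - n * H * Ifun (n - 1) t - d

/-- `Pfun n H d t = sinh^{n-1}(t) + nH·I_{n-1}(t) + d`. -/
noncomputable def Pfun (n : ℕ) (H d t : ℝ) : ℝ :=
  Real.sinh t ^ (n - 1) + n * H * Ifun (n - 1) t + d

/-- `Qfun n H d t = (nH·I_{n-1}(t) + d)/√(M·P)`. -/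
noncomputable def Qfun (n : ℕ) (H d t : ℝ) : ℝ :=
  (n * H * Ifun (n - 1) t + d) / Real.sqrt (Mfun n H d t * Pfun n H d t)

/-! Write `S = sinh^{n-1}` and `N = nH·I_{n-1} + d`, so that `M = S - N`, `P = S + N` and
`Q = u / √(1 - u²)` with `u = N / S`. Since `(sinh^m)' = m sinh^{m-1} cosh` and
`cosh - sinh = e^{-t}`, we get `0 ≤ sinh^m - m I_m ≤ m t sinh^{m-1}`, hence `I_m / sinh^m → 1/m`
and `u → nH/(n-1)`. So `Q` converges at infinity, and `λ(ρ)/ρ`, an average of `Q`, converges to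
the same limit. -/

open MeasureTheory Real Set Asymptotics

theorem intervalIntegrable_of_locallyIntegrableOn_Ici {E : Type*} [NormedAddCommGroup E]
    {f : ℝ → E} {a x y : ℝ} (hf : LocallyIntegrableOn f (Ici a)) (hx : a ≤ x) (hy : a ≤ y) :
    IntervalIntegrable f volume x y :=
  (hf.integrableOn_compact_subset (fun _ ht => (le_min hx hy).trans ht.1)
    isCompact_uIcc).intervalIntegrable

theorem isLittleO_integral_sub_of_tendsto {f : ℝ → ℝ} {a c : ℝ}
    (hf_int : LocallyIntegrableOn f (Ici a)) (hf : Tendsto f atTop (𝓝 c)) :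
    (fun ρ => ∫ t in a..ρ, (f t - c)) =o[atTop] id := by
  have hint : ∀ x y, a ≤ x → a ≤ y → IntervalIntegrable (fun t => f t - c) volume x y :=
    fun x y hx hy => (intervalIntegrable_of_locallyIntegrableOn_Ici hf_int hx hy).sub
      intervalIntegrable_const
  refine isLittleO_iff.2 fun ε hε => ?_
  obtain ⟨N, hN⟩ := Metric.tendsto_atTop.1 hf (ε / 2) (half_pos hε)
  set T := max N (max a 0)
  have hNT : N ≤ T := le_max_left _ _
  have haT : a ≤ T := (le_max_left a 0).trans (le_max_right _ _)
  have hT0 : 0 ≤ T := (le_max_right a 0).trans (le_max_right _ _)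
  have hhead := (isLittleO_const_id_atTop (∫ t in a..T, (f t - c))).def (half_pos hε)
  filter_upwards [hhead, eventually_ge_atTop T] with ρ hhead hρ
  have htail : ‖∫ t in T..ρ, (f t - c)‖ ≤ ε / 2 * |ρ - T| :=
    intervalIntegral.norm_integral_le_of_norm_le_const fun t ht => by
      rw [uIoc_of_le hρ] at ht
      exact (dist_eq_norm (f t) c ▸ hN t (hNT.trans ht.1.le)).le
  rw [← intervalIntegral.integral_add_adjacent_intervals (hint a T le_rfl haT)
    (hint T ρ haT (haT.trans hρ))]
  rw [abs_of_nonneg (sub_nonneg.2 hρ)] at htail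
  rw [id, norm_of_nonneg (hT0.trans hρ)] at hhead ⊢
  calc _ ≤ ‖∫ t in a..T, (f t - c)‖ + ‖∫ t in T..ρ, (f t - c)‖ := norm_add_le _ _
    _ ≤ ε / 2 * ρ + ε / 2 * (ρ - T) := add_le_add hhead htail
    _ ≤ ε * ρ := by nlinarith

theorem tendsto_integral_div_atTop_of_tendsto {f : ℝ → ℝ} {a c : ℝ}
    (hf_int : LocallyIntegrableOn f (Ici a)) (hf : Tendsto f atTop (𝓝 c)) :
    Tendsto (fun ρ => (∫ t in a..ρ, f t) / ρ) atTop (𝓝 c) := by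
  have h := ((isLittleO_integral_sub_of_tendsto hf_int hf).sub
    (isLittleO_const_id_atTop (a * c))).tendsto_div_nhds_zero
  rw [← zero_add c]
  refine (h.add_const c).congr' ?_
  filter_upwards [eventually_ge_atTop a, eventually_ne_atTop 0] with ρ hρ hρ0
  rw [intervalIntegral.integral_sub (intervalIntegrable_of_locallyIntegrableOn_Ici hf_int le_rfl hρ)
    intervalIntegrable_const, intervalIntegral.integral_const, smul_eq_mul, id]
  field_simp
  ring

theorem exp_isBigO_sinh : exp =O[atTop] sinh := by
  refine IsBigO.of_bound 4 ?_
  filter_upwards [eventually_ge_atTop 1] with t ht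
  have h1 := add_one_le_exp t
  have h2 : exp (-t) ≤ 1 := exp_le_one_iff.2 (by linarith)
  rw [norm_of_nonneg (exp_pos t).le, norm_of_nonneg (sinh_nonneg_iff.2 (by linarith)), sinh_eq]
  linarith

theorem isLittleO_id_sinh : (fun t : ℝ => t) =o[atTop] sinh := by
  simpa only [pow_one] using (isLittleO_pow_exp_atTop (n := 1)).trans_isBigO exp_isBigO_sinh

theorem tendsto_sinh_atTop : Tendsto sinh atTop atTop :=
  tendsto_atTop_mono' _ (eventually_ge_atTop 0 |>.mono fun _ => self_le_sinh_iff.2) tendsto_id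

theorem hasDerivAt_Ifun (m : ℕ) (t : ℝ) : HasDerivAt (Ifun m) (sinh t ^ m) t :=
  ((continuous_sinh.pow m).integral_hasStrictDerivAt 0 t).hasDerivAt

theorem continuous_Ifun (m : ℕ) : Continuous (Ifun m) :=
  continuous_iff_continuousAt.2 fun t => (hasDerivAt_Ifun m t).continuousAt

theorem abs_sinh_pow_sub_mul_Ifun_le (m : ℕ) {t : ℝ} (ht : 0 ≤ t) :
    |sinh t ^ (m + 1) - (m + 1) * Ifun (m + 1) t| ≤ (m + 1) * t * sinh t ^ m := by
  have hF : ∀ r, HasDerivAt (fun r => sinh r ^ (m + 1) - (m + 1) * Ifun (m + 1) r)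
      ((m + 1) * sinh r ^ m * exp (-r)) r := by
    intro r
    refine (((hasDerivAt_sinh r).pow (m + 1)).sub
      ((hasDerivAt_Ifun (m + 1) r).const_mul _)).congr_deriv ?_
    rw [← cosh_sub_sinh]
    push_cast
    ring
  have hint := intervalIntegral.integral_eq_sub_of_hasDerivAt (fun r _ => hF r)
    ((by fun_prop : Continuous fun r => (m + 1) * sinh r ^ m * exp (-r)).intervalIntegrable 0 t)
  simp only [Ifun, sinh_zero, intervalIntegral.integral_same, zero_pow m.succ_ne_zero, mul_zero,
    sub_zero] at hint
  rw [Ifun, ← hint, ← norm_eq_abs]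
  calc _ ≤ (m + 1) * sinh t ^ m * |t - 0| :=
        intervalIntegral.norm_integral_le_of_norm_le_const fun r hr => by
          rw [uIoc_of_le ht] at hr
          have hr0 : 0 ≤ sinh r := sinh_nonneg_iff.2 hr.1.le
          rw [norm_of_nonneg (by positivity)]
          calc (m + 1) * sinh r ^ m * exp (-r) ≤ (m + 1) * sinh r ^ m * 1 := by
                gcongr
                exact exp_le_one_iff.2 (by linarith [hr.1])
            _ ≤ (m + 1) * sinh t ^ m := by
                rw [mul_one]
                gcongr
                exact sinh_le_sinh.2 hr.2
    _ = (m + 1) * t * sinh t ^ m := by rw [sub_zero, abs_of_nonneg ht]; ring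

theorem tendsto_Ifun_div_sinh_pow (m : ℕ) :
    Tendsto (fun t => Ifun (m + 1) t / sinh t ^ (m + 1)) atTop (𝓝 (1 / (m + 1))) := by
  rw [← tendsto_sub_nhds_zero_iff]
  refine squeeze_zero_norm' ?_ isLittleO_id_sinh.tendsto_div_nhds_zero
  filter_upwards [eventually_gt_atTop 0] with t ht
  have hs : 0 < sinh t := sinh_pos_iff.2 ht
  calc ‖Ifun (m + 1) t / sinh t ^ (m + 1) - 1 / (m + 1)‖
      = |sinh t ^ (m + 1) - (m + 1) * Ifun (m + 1) t| / ((m + 1) * sinh t ^ (m + 1)) := by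
        have hden : (0 : ℝ) < (m + 1) * sinh t ^ (m + 1) := by positivity
        rw [norm_eq_abs, ← abs_neg, ← abs_of_pos hden, ← abs_div]
        congr 1
        field_simp
        ring
    _ ≤ (m + 1) * t * sinh t ^ m / ((m + 1) * sinh t ^ (m + 1)) := by
        gcongr
        exact abs_sinh_pow_sub_mul_Ifun_le m ht.le
    _ = t / sinh t := by field_simp; ring

theorem div_sqrt_sub_mul_add {s x : ℝ} (hs : 0 < s) :
    x / √((s - x) * (s + x)) = x / s / √(1 - (x / s) ^ 2) := by
  have h : (s - x) * (s + x) = s ^ 2 * (1 - (x / s) ^ 2) := by field_simp; ring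
  rw [h, sqrt_mul (sq_nonneg s), sqrt_sq hs.le, div_div]

theorem continuousOn_Qfun {n : ℕ} {H d : ℝ} {s : Set ℝ}
    (hMP : ∀ t ∈ s, 0 < Mfun n H d t * Pfun n H d t) : ContinuousOn (Qfun n H d) s := by
  have hI := continuous_Ifun (n - 1)
  refine ContinuousOn.div (by fun_prop) ?_ fun t ht => (sqrt_pos.2 (hMP t ht)).ne'
  unfold Mfun Pfun
  fun_prop

theorem tendsto_Qfun {n : ℕ} (hn : 2 ≤ n) {H : ℝ} (hH : |n * H / ((n : ℝ) - 1)| < 1) (d : ℝ) :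
    Tendsto (Qfun n H d) atTop
      (𝓝 ((n * H / ((n : ℝ) - 1)) / √(1 - (n * H / ((n : ℝ) - 1)) ^ 2))) := by
  obtain ⟨m, rfl⟩ : ∃ m, n = m + 2 := ⟨n - 2, by omega⟩
  have hcast : ((m + 2 : ℕ) : ℝ) - 1 = m + 1 := by push_cast; ring
  simp only [hcast] at hH ⊢
  set u := fun t => ((m + 2 : ℕ) * H * Ifun (m + 1) t + d) / sinh t ^ (m + 1)
  have hu : Tendsto u atTop (𝓝 ((m + 2 : ℕ) * H / (m + 1))) := by
    have hinv : Tendsto (fun t => (sinh t ^ (m + 1))⁻¹) atTop (𝓝 0) :=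
      tendsto_inv_atTop_zero.comp ((tendsto_pow_atTop m.succ_ne_zero).comp tendsto_sinh_atTop)
    convert ((tendsto_Ifun_div_sinh_pow m).const_mul ((m + 2 : ℕ) * H)).add (hinv.const_mul d)
      using 2
    · simp only [u]; ring
    · ring
  have hQ : Qfun (m + 2) H d =ᶠ[atTop] fun t => u t / √(1 - u t ^ 2) := by
    filter_upwards [eventually_gt_atTop 0] with t ht
    rw [← div_sqrt_sub_mul_add (pow_pos (sinh_pos_iff.2 ht) _), Qfun, Mfun, Pfun,
      show m + 2 - 1 = m + 1 from rfl]
    congr 2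
    ring
  have hpos : 0 < 1 - ((m + 2 : ℕ) * H / (m + 1)) ^ 2 := by
    nlinarith [abs_lt.1 hH]
  exact (hu.div ((hu.pow 2).const_sub 1).sqrt (sqrt_pos.2 hpos).ne').congr' hQ.symm

theorem stmt8_general (n : ℕ) (hn : 2 ≤ n) (H d : ℝ) (hH0 : 0 < H) (hH1 : H < ((n : ℝ) - 1) / n)
    (ρ₀ : ℝ)
    (hMP : ∀ t, ρ₀ ≤ t → 0 < Mfun n H d t ∧ 0 < Pfun n H d t) :
    Tendsto (fun ρ : ℝ => (∫ t in ρ₀..ρ, Qfun n H d t) / ρ) atTop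
      (𝓝 ((n * H / ((n : ℝ) - 1)) / Real.sqrt (1 - (n * H / ((n : ℝ) - 1)) ^ 2))) := by
  have hn1 : (0 : ℝ) < n - 1 := by
    have : (2 : ℝ) ≤ n := by exact_mod_cast hn
    linarith
  have hH : |n * H / ((n : ℝ) - 1)| < 1 := by
    rw [abs_of_pos (by positivity), div_lt_one hn1]
    rwa [lt_div_iff₀ (by linarith), mul_comm] at hH1
  have hQ_cont : ContinuousOn (Qfun n H d) (Ici ρ₀) :=
    continuousOn_Qfun fun t ht => mul_pos (hMP t ht).1 (hMP t ht).2
  exact tendsto_integral_div_atTop_of_tendsto (hQ_cont.locallyIntegrableOn measurableSet_Ici)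
    (tendsto_Qfun hn hH d)

/-- Let `n ≥ 2`, `0 < H < (n-1)/n`, `d ∈ ℝ`. Let `ρ₀ > 0` be such that `M_{H,d} > 0` and
`P_{H,d} > 0` on `[ρ₀, ∞)`, and set `λ(ρ) := ∫_{ρ₀}^{ρ} Q_{H,d}(t) dt`. Then
`lim_{ρ→∞} λ(ρ)/ρ = (nH/(n-1)) / √(1 − (nH/(n-1))²)`. -/
theorem stmt8 (n : ℕ) (hn : 2 ≤ n) (H d : ℝ) (hH0 : 0 < H) (hH1 : H < ((n : ℝ) - 1) / n)
    (ρ₀ : ℝ) (hρ₀ : 0 < ρ₀)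
    (hMP : ∀ t, ρ₀ ≤ t → 0 < Mfun n H d t ∧ 0 < Pfun n H d t) :
    Tendsto (fun ρ : ℝ => (∫ t in ρ₀..ρ, Qfun n H d t) / ρ) atTop
      (𝓝 ((n * H / ((n : ℝ) - 1)) / Real.sqrt (1 - (n * H / ((n : ℝ) - 1)) ^ 2))) :=
  stmt8_general n hn H d hH0 hH1 ρ₀ hMP
end

section
/- Let n ≥ 2 be an integer and let 0 < H < (n-1)/n. Let t_H > 0 be defined by tanh(t_H) = nH/(n-1), and set d_H := cosh^{n-1}(t_H) − nH·J_{n-1}(t_H). Then R_{H,d_H}(t) > 0 and S_{H,d_H}(t) > 0 for all t > t_H, and for any fixed ρ₀ > t_H the function μ(ρ) := ∫_{ρ₀}^{ρ} T_{H,d_H}(t) dt is strictly increasing on (t_H, ∞), satisfies μ(ρ) → −∞ as ρ → t_H⁺ (the improper integral diverges at the double zero t_H of R_{H,d_H}), and μ(ρ) → +∞ as ρ → ∞. -/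
/-!
Write `c = cosh^{n-1}` and `U = nH·J_{n-1} + d`, so that `R = c - U`, `S = c + U` and
`T = U / √(c² - U²)`. Since `nH = (n-1) tanh t_H`, the derivative of `R` is
`(n-1) cosh^{n-2}(t) sinh(t - t_H) / cosh t_H`: it vanishes at `t_H`, where `R` vanishes too,
and increases after it. Hence `0 < R(t) ≤ K c(t) (t - t_H)²` for `t > t_H`. Moreover
`U - tanh(t_H) c` is nondecreasing and nonnegative at `t_H`, so `T ≥ U / c ≥ tanh t_H` and
`T ≥ κ / (t - t_H)` on `(t_H, ∞)`. Comparing `μ` with the integrals of a positive constant and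
of `κ / (t - t_H)` gives the two limits.
-/

open Filter Topology

/-- `Jfun m t = ∫₀ᵗ cosh^m(r) dr`. -/
noncomputable def Jfun (m : ℕ) (t : ℝ) : ℝ := ∫ r in (0:ℝ)..t, Real.cosh r ^ m

/-- `Rfun n H d t = cosh^{n-1}(t) − nH·J_{n-1}(t) − d`. -/
noncomputable def Rfun (n : ℕ) (H d t : ℝ) : ℝ :=
  Real.cosh t ^ (n - 1) - n * H * Jfun (n - 1) t - d

/-- `Sfun n H d t = cosh^{n-1}(t) + nH·J_{n-1}(t) + d`. -/
noncomputable def Sfun (n : ℕ) (H d t : ℝ) : ℝ :=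
  Real.cosh t ^ (n - 1) + n * H * Jfun (n - 1) t + d

/-- `Tfun n H d t = (nH·J_{n-1}(t) + d)/√(R·S)`. -/
noncomputable def Tfun (n : ℕ) (H d t : ℝ) : ℝ :=
  (n * H * Jfun (n - 1) t + d) / Real.sqrt (Rfun n H d t * Sfun n H d t)

open Real Set MeasureTheory

section Comparison

variable {f : ℝ → ℝ} {a ρ₀ : ℝ}

lemma intervalIntegrable_of_continuousOn_Ioi (hf : ContinuousOn f (Ioi a)) {x y : ℝ}
    (hx : a < x) (hy : a < y) : IntervalIntegrable f volume x y :=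
  (hf.mono fun _ ht => (lt_min hx hy).trans_le ht.1).intervalIntegrable

lemma strictMonoOn_integral_of_pos (hf : ContinuousOn f (Ioi a))
    (hpos : ∀ t ∈ Ioi a, 0 < f t) (hρ₀ : a < ρ₀) :
    StrictMonoOn (fun ρ => ∫ t in ρ₀..ρ, f t) (Ioi a) := by
  intro x hx y hy hxy
  have hint := intervalIntegrable_of_continuousOn_Ioi hf hx hy
  have hsplit := intervalIntegral.integral_add_adjacent_intervals
    (intervalIntegrable_of_continuousOn_Ioi hf hρ₀ hx) hint
  have hpos_xy : 0 < ∫ t in x..y, f t :=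
    intervalIntegral.intervalIntegral_pos_of_pos_on hint
      (fun t ht => hpos t (lt_trans hx ht.1)) hxy
  dsimp only
  linarith

lemma tendsto_integral_atTop_of_const_le (hf : ContinuousOn f (Ioi a)) {ε : ℝ} (hε : 0 < ε)
    (hle : ∀ t ∈ Ioi a, ε ≤ f t) (hρ₀ : a < ρ₀) :
    Tendsto (fun ρ => ∫ t in ρ₀..ρ, f t) atTop atTop := by
  have hlin : Tendsto (fun ρ => ε * (ρ - ρ₀)) atTop atTop :=
    (tendsto_atTop_add_const_right _ _ tendsto_id).const_mul_atTop hε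
  refine tendsto_atTop_mono' _ ?_ hlin
  filter_upwards [eventually_ge_atTop ρ₀] with ρ hρ
  calc ε * (ρ - ρ₀) = ∫ _ in ρ₀..ρ, ε := by simp [mul_comm]
    _ ≤ ∫ t in ρ₀..ρ, f t :=
      intervalIntegral.integral_mono_on hρ intervalIntegrable_const
        (intervalIntegrable_of_continuousOn_Ioi hf hρ₀ (hρ₀.trans_le hρ))
        fun t ht => hle t (hρ₀.trans_le ht.1)

lemma integral_div_sub (a : ℝ) {κ x y : ℝ} (hx : a < x) (hy : a < y) :
    ∫ t in x..y, κ / (t - a) = κ * (log (y - a) - log (x - a)) := by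
  simp_rw [div_eq_mul_inv]
  rw [intervalIntegral.integral_const_mul, intervalIntegral.integral_comp_sub_right (·⁻¹),
    integral_inv_of_pos (sub_pos.2 hx) (sub_pos.2 hy),
    log_div (sub_pos.2 hy).ne' (sub_pos.2 hx).ne']

lemma tendsto_integral_nhdsGT_atBot_of_div_sub_le (hf : ContinuousOn f (Ioi a)) {κ : ℝ}
    (hκ : 0 < κ) (hle : ∀ t ∈ Ioi a, κ / (t - a) ≤ f t) (hρ₀ : a < ρ₀) :
    Tendsto (fun ρ => ∫ t in ρ₀..ρ, f t) (𝓝[>] a) atBot := by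
  have hshift : Tendsto (fun ρ => ρ - a) (𝓝[>] a) (𝓝[>] 0) := by
    simpa using ((continuous_sub_right a).continuousWithinAt (s := Ioi a) (x := a))
      |>.tendsto_nhdsWithin (t := Ioi 0) fun x hx => sub_pos.2 hx
  have hlog : Tendsto (fun ρ => κ * (log (ρ - a) - log (ρ₀ - a))) (𝓝[>] a) atBot :=
    (tendsto_atBot_add_const_right _ _ (tendsto_log_nhdsGT_zero.comp hshift)).const_mul_atBot hκ
  refine tendsto_atBot_mono' _ ?_ hlog
  filter_upwards [Ioo_mem_nhdsGT hρ₀] with ρ hρ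
  have hcont : ContinuousOn (fun t => κ / (t - a)) (Ioi a) := fun t ht =>
    (continuousAt_const.div (continuousAt_id.sub continuousAt_const)
      (sub_pos.2 ht).ne').continuousWithinAt
  have hcomp : ∫ t in ρ..ρ₀, κ / (t - a) ≤ ∫ t in ρ..ρ₀, f t :=
    intervalIntegral.integral_mono_on hρ.2.le
      (intervalIntegrable_of_continuousOn_Ioi hcont hρ.1 hρ₀)
      (intervalIntegrable_of_continuousOn_Ioi hf hρ.1 hρ₀)
      fun t ht => hle t (hρ.1.trans_le ht.1)
  rw [integral_div_sub a hρ.1 hρ₀] at hcomp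
  rw [intervalIntegral.integral_symm]
  linarith

end Comparison

lemma image_sub_le_deriv_mul_sub_of_monotoneOn {f f' : ℝ → ℝ} {a b : ℝ}
    (hf : ∀ x, HasDerivAt f (f' x) x) (hf' : MonotoneOn f' (Icc a b)) (hab : a ≤ b) :
    f b - f a ≤ f' b * (b - a) :=
  (convex_Icc a b).image_sub_le_mul_sub_of_deriv_le
    (fun x _ => (hf x).continuousAt.continuousWithinAt)
    (fun x _ => (hf x).differentiableAt.differentiableWithinAt)
    (fun x hx => (hf x).deriv ▸ hf' (interior_subset hx) ⟨hab, le_rfl⟩ (interior_subset hx).2)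
    a ⟨le_rfl, hab⟩ b ⟨hab, le_rfl⟩ hab

lemma sinh_le_mul_cosh {x : ℝ} (hx : 0 ≤ x) : sinh x ≤ x * cosh x := by
  have := image_sub_le_deriv_mul_sub_of_monotoneOn hasDerivAt_sinh
    (cosh_strictMonoOn.monotoneOn.mono Icc_subset_Ici_self) hx
  simpa [mul_comm] using this

lemma tanh_pos_of_pos {x : ℝ} (hx : 0 < x) : 0 < tanh x := by
  rw [tanh_eq_sinh_div_cosh]; exact div_pos (sinh_pos_iff.2 hx) (cosh_pos x)

section Profile

variable {n : ℕ} {H d tH : ℝ}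

lemma cast_sub_one_pos (hn : 2 ≤ n) : (0 : ℝ) < n - 1 := by
  have : (2 : ℝ) ≤ n := by exact_mod_cast hn
  linarith

noncomputable def Ufun (n : ℕ) (H d t : ℝ) : ℝ := n * H * Jfun (n - 1) t + d

lemma Rfun_eq (t : ℝ) : Rfun n H d t = cosh t ^ (n - 1) - Ufun n H d t := by
  rw [Rfun, Ufun]; ring

lemma Sfun_eq (t : ℝ) : Sfun n H d t = cosh t ^ (n - 1) + Ufun n H d t := by
  rw [Sfun, Ufun]; ring

lemma Rfun_mul_Sfun (t : ℝ) :
    Rfun n H d t * Sfun n H d t = (cosh t ^ (n - 1)) ^ 2 - Ufun n H d t ^ 2 := by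
  rw [Rfun_eq, Sfun_eq]; ring

lemma Tfun_eq (t : ℝ) :
    Tfun n H d t = Ufun n H d t / √((cosh t ^ (n - 1)) ^ 2 - Ufun n H d t ^ 2) := by
  rw [← Rfun_mul_Sfun]; rfl

lemma hasDerivAt_Jfun (m : ℕ) (t : ℝ) : HasDerivAt (Jfun m) (cosh t ^ m) t :=
  ((continuous_cosh.pow m).integral_hasStrictDerivAt 0 t).hasDerivAt

lemma hasDerivAt_Ufun (t : ℝ) : HasDerivAt (Ufun n H d) (n * H * cosh t ^ (n - 1)) t :=
  ((hasDerivAt_Jfun (n - 1) t).const_mul _).add_const d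

lemma continuous_Ufun : Continuous (Ufun n H d) :=
  continuous_iff_continuousAt.2 fun t => (hasDerivAt_Ufun t).continuousAt

lemma hasDerivAt_cosh_pow_pred (hn : 1 ≤ n) (t : ℝ) :
    HasDerivAt (fun t => cosh t ^ (n - 1)) ((n - 1) * cosh t ^ (n - 2) * sinh t) t := by
  refine ((hasDerivAt_cosh t).pow (n - 1)).congr_deriv ?_
  rw [show n - 1 - 1 = n - 2 by omega, Nat.cast_sub hn, Nat.cast_one]

lemma cosh_pow_pred_eq (hn : 2 ≤ n) (t : ℝ) : cosh t ^ (n - 1) = cosh t ^ (n - 2) * cosh t := by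
  rw [← pow_succ]; congr 1; omega

lemma hasDerivAt_Rfun (hn : 2 ≤ n) (hnH : n * H = (n - 1) * tanh tH) (t : ℝ) :
    HasDerivAt (Rfun n H d) ((n - 1) / cosh tH * (cosh t ^ (n - 2) * sinh (t - tH))) t := by
  have h := (hasDerivAt_cosh_pow_pred (n := n) (by omega) t).sub
    (hasDerivAt_Ufun (n := n) (H := H) (d := d) t)
  rw [show Rfun n H d = fun t => cosh t ^ (n - 1) - Ufun n H d t from funext Rfun_eq]
  refine h.congr_deriv ?_
  rw [hnH, cosh_pow_pred_eq hn, tanh_eq_sinh_div_cosh, sinh_sub]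
  field_simp

lemma Rfun_pos (hn : 2 ≤ n) (hnH : n * H = (n - 1) * tanh tH) (hR : Rfun n H d tH = 0) {t : ℝ}
    (ht : tH < t) : 0 < Rfun n H d t := by
  have hmono : StrictMonoOn (Rfun n H d) (Ici tH) :=
    strictMonoOn_of_deriv_pos (convex_Ici tH)
      (fun x _ => (hasDerivAt_Rfun hn hnH x).continuousAt.continuousWithinAt) fun x hx => by
        rw [interior_Ici] at hx
        rw [(hasDerivAt_Rfun hn hnH x).deriv]
        exact mul_pos (div_pos (cast_sub_one_pos hn) (cosh_pos tH))
          (mul_pos (pow_pos (cosh_pos x) _) (sinh_pos_iff.2 (sub_pos.2 hx)))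
  simpa [hR] using hmono self_mem_Ici ht.le ht

lemma Rfun_le (hn : 2 ≤ n) (htH : 0 ≤ tH) (hnH : n * H = (n - 1) * tanh tH)
    (hR : Rfun n H d tH = 0) {t : ℝ} (ht : tH ≤ t) :
    Rfun n H d t ≤ (n - 1) / cosh tH * cosh t ^ (n - 1) * (t - tH) ^ 2 := by
  have hK : 0 ≤ ((n : ℝ) - 1) / cosh tH := div_nonneg (cast_sub_one_pos hn).le (cosh_pos tH).le
  have hmono : MonotoneOn (fun s => (n - 1) / cosh tH * (cosh s ^ (n - 2) * sinh (s - tH)))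
      (Icc tH t) := fun a ha b hb hab => by
    have hcosh : cosh a ≤ cosh b :=
      cosh_strictMonoOn.monotoneOn (htH.trans ha.1) (htH.trans hb.1) hab
    exact mul_le_mul_of_nonneg_left (mul_le_mul (pow_le_pow_left₀ (cosh_pos a).le hcosh _)
      (sinh_le_sinh.2 (by linarith)) (sinh_nonneg_iff.2 (sub_nonneg.2 ha.1)) (by positivity)) hK
  have hmvt :=
    image_sub_le_deriv_mul_sub_of_monotoneOn (hasDerivAt_Rfun (d := d) hn hnH) hmono ht
  have hcosh : cosh (t - tH) ≤ cosh t :=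
    cosh_le_cosh.2 <| by
      rw [abs_of_nonneg (sub_nonneg.2 ht), abs_of_nonneg (htH.trans ht)]; linarith
  have hsinh : sinh (t - tH) ≤ (t - tH) * cosh t :=
    (sinh_le_mul_cosh (sub_nonneg.2 ht)).trans
      (mul_le_mul_of_nonneg_left hcosh (sub_nonneg.2 ht))
  rw [hR, sub_zero] at hmvt
  calc Rfun n H d t ≤ _ := hmvt
    _ ≤ (n - 1) / cosh tH * (cosh t ^ (n - 2) * ((t - tH) * cosh t)) * (t - tH) := by
      gcongr
    _ = _ := by rw [cosh_pow_pred_eq hn]; ring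

lemma tanh_mul_cosh_pow_le_Ufun (hn : 2 ≤ n) (htH : 0 ≤ tH) (hnH : n * H = (n - 1) * tanh tH)
    (hR : Rfun n H d tH = 0) {t : ℝ} (ht : tH ≤ t) :
    tanh tH * cosh t ^ (n - 1) ≤ Ufun n H d t := by
  have hderiv : ∀ s, HasDerivAt (fun s => Ufun n H d s - tanh tH * cosh s ^ (n - 1))
      ((n - 1) * tanh tH * cosh s ^ (n - 2) * (cosh s - sinh s)) s := fun s =>
    ((hasDerivAt_Ufun s).sub ((hasDerivAt_cosh_pow_pred (by omega) s).const_mul _)).congr_deriv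
      (by rw [hnH, cosh_pow_pred_eq hn]; ring)
  have htanh : 0 ≤ tanh tH := by
    rw [tanh_eq_sinh_div_cosh]; exact div_nonneg (sinh_nonneg_iff.2 htH) (cosh_pos tH).le
  have hn1 := (cast_sub_one_pos hn).le
  have hmono : Monotone fun s => Ufun n H d s - tanh tH * cosh s ^ (n - 1) :=
    monotone_of_deriv_nonneg (fun s => (hderiv s).differentiableAt) fun s => by
      rw [(hderiv s).deriv]
      have := (sub_pos.2 (sinh_lt_cosh s)).le
      positivity
  have hU : Ufun n H d tH = cosh tH ^ (n - 1) := by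
    linarith [Rfun_eq (n := n) (H := H) (d := d) tH]
  have := hmono ht
  simp only [hU] at this
  nlinarith [tanh_lt_one tH, pow_pos (cosh_pos tH) (n - 1)]

lemma Ufun_pos (hn : 2 ≤ n) (htH : 0 < tH) (hnH : n * H = (n - 1) * tanh tH)
    (hR : Rfun n H d tH = 0) {t : ℝ} (ht : tH ≤ t) : 0 < Ufun n H d t :=
  (mul_pos (tanh_pos_of_pos htH) (pow_pos (cosh_pos t) _)).trans_le
    (tanh_mul_cosh_pow_le_Ufun hn htH.le hnH hR ht)

lemma Sfun_pos (hn : 2 ≤ n) (htH : 0 < tH) (hnH : n * H = (n - 1) * tanh tH)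
    (hR : Rfun n H d tH = 0) {t : ℝ} (ht : tH ≤ t) : 0 < Sfun n H d t := by
  have := Ufun_pos hn htH hnH hR ht
  rw [Sfun_eq]
  positivity

lemma Rfun_mul_Sfun_pos (hn : 2 ≤ n) (htH : 0 < tH) (hnH : n * H = (n - 1) * tanh tH)
    (hR : Rfun n H d tH = 0) {t : ℝ} (ht : tH < t) : 0 < Rfun n H d t * Sfun n H d t :=
  mul_pos (Rfun_pos hn hnH hR ht) (Sfun_pos hn htH hnH hR ht.le)

lemma continuousOn_Tfun (hn : 2 ≤ n) (htH : 0 < tH) (hnH : n * H = (n - 1) * tanh tH)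
    (hR : Rfun n H d tH = 0) : ContinuousOn (Tfun n H d) (Ioi tH) := by
  rw [show Tfun n H d = _ from funext Tfun_eq]
  refine fun t ht => ContinuousAt.continuousWithinAt ?_
  refine continuous_Ufun.continuousAt.div
    (((continuous_cosh.pow _).pow 2).sub (continuous_Ufun.pow 2)).continuousAt.sqrt ?_
  rw [← Rfun_mul_Sfun]
  exact (sqrt_pos.2 (Rfun_mul_Sfun_pos hn htH hnH hR ht)).ne'

lemma tanh_le_Tfun (hn : 2 ≤ n) (htH : 0 < tH) (hnH : n * H = (n - 1) * tanh tH)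
    (hR : Rfun n H d tH = 0) {t : ℝ} (ht : tH < t) : tanh tH ≤ Tfun n H d t := by
  have hc := pow_pos (cosh_pos t) (n - 1)
  have hRS := Rfun_mul_Sfun_pos hn htH hnH hR ht
  rw [Rfun_mul_Sfun] at hRS
  rw [Tfun_eq]
  calc tanh tH = tanh tH * cosh t ^ (n - 1) / cosh t ^ (n - 1) := by field_simp
    _ ≤ _ := div_le_div₀ (Ufun_pos hn htH hnH hR ht.le).le
      (tanh_mul_cosh_pow_le_Ufun hn htH.le hnH hR ht.le) (sqrt_pos.2 hRS)
      (sqrt_le_iff.2 ⟨hc.le, sub_le_self _ (sq_nonneg _)⟩)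

lemma exists_div_sub_le_Tfun (hn : 2 ≤ n) (htH : 0 < tH) (hnH : n * H = (n - 1) * tanh tH)
    (hR : Rfun n H d tH = 0) : ∃ κ > 0, ∀ t ∈ Ioi tH, κ / (t - tH) ≤ Tfun n H d t := by
  set K := ((n : ℝ) - 1) / cosh tH
  have hK : 0 < K := div_pos (cast_sub_one_pos hn) (cosh_pos tH)
  refine ⟨tanh tH / √(2 * K), div_pos (tanh_pos_of_pos htH) (by positivity), fun t ht => ?_⟩
  have ht' : 0 < t - tH := sub_pos.2 ht
  have hc := pow_pos (cosh_pos t) (n - 1)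
  have hRpos := Rfun_pos (d := d) hn hnH hR ht
  have hRle := Rfun_le hn htH.le hnH hR ht.le
  have hSle : Sfun n H d t ≤ 2 * cosh t ^ (n - 1) := by
    rw [Rfun_eq] at hRpos; rw [Sfun_eq]; linarith
  have hRS : Rfun n H d t * Sfun n H d t ≤ (√(2 * K) * cosh t ^ (n - 1) * (t - tH)) ^ 2 := by
    rw [mul_pow, mul_pow, sq_sqrt (by positivity)]
    calc _ ≤ K * cosh t ^ (n - 1) * (t - tH) ^ 2 * (2 * cosh t ^ (n - 1)) :=
          mul_le_mul hRle hSle (Sfun_pos hn htH hnH hR ht.le).le (by positivity)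
      _ = _ := by ring
  calc tanh tH / √(2 * K) / (t - tH)
      = tanh tH * cosh t ^ (n - 1) / (√(2 * K) * cosh t ^ (n - 1) * (t - tH)) := by
        field_simp
    _ ≤ Ufun n H d t / √(Rfun n H d t * Sfun n H d t) :=
        div_le_div₀ (Ufun_pos hn htH hnH hR ht.le).le
          (tanh_mul_cosh_pow_le_Ufun hn htH.le hnH hR ht.le)
          (sqrt_pos.2 (Rfun_mul_Sfun_pos hn htH hnH hR ht))
          (sqrt_le_iff.2 ⟨by positivity, hRS⟩)
    _ = Tfun n H d t := rfl

end Profile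

theorem stmt19_general (n : ℕ) (hn : 2 ≤ n) (H : ℝ)
    (tH : ℝ) (htH : 0 < tH) (htanh : Real.tanh tH = n * H / ((n : ℝ) - 1))
    (dH : ℝ) (hdH : dH = Real.cosh tH ^ (n - 1) - n * H * Jfun (n - 1) tH) :
    (∀ t, tH < t → 0 < Rfun n H dH t ∧ 0 < Sfun n H dH t) ∧
    ∀ ρ₀ : ℝ, tH < ρ₀ →
      StrictMonoOn (fun ρ : ℝ => ∫ t in ρ₀..ρ, Tfun n H dH t) (Set.Ioi tH) ∧
      Tendsto (fun ρ : ℝ => ∫ t in ρ₀..ρ, Tfun n H dH t) (𝓝[>] tH) atBot ∧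
      Tendsto (fun ρ : ℝ => ∫ t in ρ₀..ρ, Tfun n H dH t) atTop atTop := by
  have hnH : (n : ℝ) * H = (n - 1) * tanh tH := by
    rw [htanh]
    field_simp [(cast_sub_one_pos hn).ne']
  have hR : Rfun n H dH tH = 0 := by rw [Rfun, hdH]; ring
  have hT := continuousOn_Tfun hn htH hnH hR
  have htanh_le : ∀ t ∈ Ioi tH, tanh tH ≤ Tfun n H dH t := fun t ht =>
    tanh_le_Tfun hn htH hnH hR ht
  obtain ⟨κ, hκ, hκT⟩ := exists_div_sub_le_Tfun hn htH hnH hR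
  refine ⟨fun t ht => ⟨Rfun_pos hn hnH hR ht, Sfun_pos hn htH hnH hR ht.le⟩,
    fun ρ₀ hρ₀ => ⟨?_, ?_, ?_⟩⟩
  · exact strictMonoOn_integral_of_pos hT
      (fun t ht => (tanh_pos_of_pos htH).trans_le (htanh_le t ht)) hρ₀
  · exact tendsto_integral_nhdsGT_atBot_of_div_sub_le hT hκ hκT hρ₀
  · exact tendsto_integral_atTop_of_const_le hT (tanh_pos_of_pos htH) htanh_le hρ₀

/-- Let `n ≥ 2` and `0 < H < (n-1)/n`. Let `t_H > 0` satisfy `tanh(t_H) = nH/(n-1)` and set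
`d_H := cosh^{n-1}(t_H) − nH·J_{n-1}(t_H)`. Then `R_{H,d_H} > 0` and `S_{H,d_H} > 0` on
`(t_H, ∞)`, and for any `ρ₀ > t_H` the function `μ(ρ) := ∫_{ρ₀}^{ρ} T_{H,d_H}(t) dt` is
strictly increasing on `(t_H, ∞)`, tends to `−∞` as `ρ → t_H⁺`, and tends to `+∞` as
`ρ → ∞`. -/
theorem stmt19 (n : ℕ) (hn : 2 ≤ n) (H : ℝ) (hH0 : 0 < H) (hH1 : H < ((n : ℝ) - 1) / n)
    (tH : ℝ) (htH : 0 < tH) (htanh : Real.tanh tH = n * H / ((n : ℝ) - 1))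
    (dH : ℝ) (hdH : dH = Real.cosh tH ^ (n - 1) - n * H * Jfun (n - 1) tH) :
    (∀ t, tH < t → 0 < Rfun n H dH t ∧ 0 < Sfun n H dH t) ∧
    ∀ ρ₀ : ℝ, tH < ρ₀ →
      StrictMonoOn (fun ρ : ℝ => ∫ t in ρ₀..ρ, Tfun n H dH t) (Set.Ioi tH) ∧
      Tendsto (fun ρ : ℝ => ∫ t in ρ₀..ρ, Tfun n H dH t) (𝓝[>] tH) atBot ∧
      Tendsto (fun ρ : ℝ => ∫ t in ρ₀..ρ, Tfun n H dH t) atTop atTop :=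
  stmt19_general n hn H tH htH htanh dH hdH
end
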